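/- arXiv:2105.10055 — 6 statements merged into one kernel-verified Lean document; each statement's English description precedes it below -/
import Mathlib

section
/- Let (V, τ, w, ω) be an abstract polynomial portrait of degree d, and let u be a finite critical value. Let U = {c ∈ V : c ≠ ω, w c ≥ 2, τ c = u} and W = {c ∈ V : c ≠ ω, w c ≥ 2, τ c ≠ u}. Then ∑_{c ∈ W} (w c − 1) = d − 1 + #U − ∑_{c ∈ U} w c, and consequently ∑_{c ∈ W} (w c − 1) ≥ #U − 1. -/
/-- Line (rh) of Floyd–Kim–Koch–Parry–Saenz: if `u` is a finite critical value of an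
abstract polynomial portrait, `U` is the set of critical vertices mapping to `u` and
`W` the set of remaining finite critical vertices, then
`∑_{c ∈ W} (w c − 1) = d − 1 + #U − ∑_{c ∈ U} w c ≥ #U − 1`. -/
theorem rh_line
    {V : Type*} [Fintype V] [DecidableEq V]
    (τ : V → V) (w : V → ℕ) (ω : V) (d : ℕ)
    (hd : 2 ≤ d)
    (hw : ∀ v, 1 ≤ w v)
    (hfix : τ ω = ω) (hwω : w ω = d)
    (hcp : ∀ v, 2 ≤ w v ∨ ∃ c k, 2 ≤ w c ∧ 1 ≤ k ∧ τ^[k] c = v)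
    (hRH : ∑ v, (w v - 1) = 2 * d - 2)
    (hloc : ∀ v, ∑ u ∈ Finset.univ.filter (fun u => τ u = v), w u ≤ d)
    (u : V) (hu : ∃ c, c ≠ ω ∧ 2 ≤ w c ∧ τ c = u) :
    (∑ c ∈ Finset.univ.filter (fun c => c ≠ ω ∧ 2 ≤ w c ∧ τ c ≠ u), ((w c : ℤ) - 1)) =
      (d : ℤ) - 1 + (Finset.univ.filter (fun c => c ≠ ω ∧ 2 ≤ w c ∧ τ c = u)).card -
        ∑ c ∈ Finset.univ.filter (fun c => c ≠ ω ∧ 2 ≤ w c ∧ τ c = u), (w c : ℤ) ∧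
    ((Finset.univ.filter (fun c => c ≠ ω ∧ 2 ≤ w c ∧ τ c = u)).card : ℤ) - 1 ≤
      ∑ c ∈ Finset.univ.filter (fun c => c ≠ ω ∧ 2 ≤ w c ∧ τ c ≠ u), ((w c : ℤ) - 1) := by
  classical
  set U := Finset.univ.filter (fun c => c ≠ ω ∧ 2 ≤ w c ∧ τ c = u) with hU
  set W := Finset.univ.filter (fun c => c ≠ ω ∧ 2 ≤ w c ∧ τ c ≠ u) with hW
  have hZ : ∑ v, ((w v : ℤ) - 1) = 2 * (d : ℤ) - 2 := by
    calc ∑ v, ((w v : ℤ) - 1) = ∑ v, (((w v - 1 : ℕ)) : ℤ) :=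
          Finset.sum_congr rfl (fun v _ => by have := hw v; omega)
      _ = ((2 * d - 2 : ℕ) : ℤ) := by rw [← Nat.cast_sum, hRH]
      _ = 2 * (d : ℤ) - 2 := by omega
  -- sum over finite vertices
  have h1 : ∑ c ∈ Finset.univ.filter (fun c => ¬ c = ω), ((w c : ℤ) - 1) = (d : ℤ) - 1 := by
    have hsplit := Finset.sum_filter_add_sum_filter_not Finset.univ (fun c => c = ω)
      (fun c => ((w c : ℤ) - 1))
    have hsing : Finset.univ.filter (fun c => c = ω) = {ω} := by
      ext c; simp
    rw [hsing, Finset.sum_singleton, hwω, hZ] at hsplit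
    have hd' : (2 : ℤ) ≤ d := by exact_mod_cast hd
    linarith
  -- restrict to critical vertices
  have h2 : ∑ c ∈ Finset.univ.filter (fun c => c ≠ ω ∧ 2 ≤ w c), ((w c : ℤ) - 1)
      = (d : ℤ) - 1 := by
    rw [← h1]
    refine Finset.sum_subset ?_ ?_
    · intro c hc
      simp only [Finset.mem_filter, Finset.mem_univ, true_and] at hc ⊢
      exact hc.1
    · intro c hc hnc
      simp only [Finset.mem_filter, Finset.mem_univ, true_and] at hc hnc
      have h1c : w c = 1 := by
        have := hw c
        by_contra h
        exact hnc ⟨hc, by omega⟩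
      simp [h1c]
  -- split by τ c = u
  have hsplit2 := Finset.sum_filter_add_sum_filter_not
    (Finset.univ.filter (fun c => c ≠ ω ∧ 2 ≤ w c)) (fun c => τ c = u)
    (fun c => ((w c : ℤ) - 1))
  have hUeq : (Finset.univ.filter (fun c => c ≠ ω ∧ 2 ≤ w c)).filter (fun c => τ c = u) = U := by
    rw [hU]; ext c; simp [and_assoc]
  have hWeq : (Finset.univ.filter (fun c => c ≠ ω ∧ 2 ≤ w c)).filter (fun c => ¬ τ c = u) = W := by
    rw [hW]; ext c; simp [and_assoc]
  rw [hUeq, hWeq, h2] at hsplit2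
  have hUsum : ∑ c ∈ U, ((w c : ℤ) - 1) = (∑ c ∈ U, (w c : ℤ)) - U.card := by
    rw [Finset.sum_sub_distrib, Finset.sum_const]
    simp
  have h3 : ∑ c ∈ U, (w c : ℤ) ≤ (d : ℤ) := by
    have hsub : U ⊆ Finset.univ.filter (fun c => τ c = u) := by
      intro c hc
      rw [hU] at hc
      simp only [Finset.mem_filter, Finset.mem_univ, true_and] at hc ⊢
      exact hc.2.2
    have := Finset.sum_le_sum_of_subset (f := w) hsub
    have := this.trans (hloc u)
    exact_mod_cast this
  constructor
  · linarith
  · linarith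
end

section
/- Let (V, τ, w, ω) be an abstract polynomial portrait of degree d, and suppose it has exactly one finite critical value u (i.e., u = τ c for some finite critical vertex c, and every finite critical vertex c′ satisfies τ c′ = u). Then there is exactly one finite critical vertex c; moreover w c = d, and c is the only vertex of V whose τ-image is u. -/
/-- If an abstract polynomial portrait has exactly one finite critical value `u`, then
there is exactly one finite critical vertex `c`; moreover `w c = d` and `c` is the only
vertex whose `τ`-image is `u`. -/
theorem unique_finite_critical_value
    {V : Type*} [Fintype V] [DecidableEq V]
    (τ : V → V) (w : V → ℕ) (ω : V) (d : ℕ)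
    (hd : 2 ≤ d)
    (hw : ∀ v, 1 ≤ w v)
    (hfix : τ ω = ω) (hwω : w ω = d)
    (hcp : ∀ v, 2 ≤ w v ∨ ∃ c k, 2 ≤ w c ∧ 1 ≤ k ∧ τ^[k] c = v)
    (hRH : ∑ v, (w v - 1) = 2 * d - 2)
    (hloc : ∀ v, ∑ u ∈ Finset.univ.filter (fun u => τ u = v), w u ≤ d)
    (u : V) (hu : ∃ c, c ≠ ω ∧ 2 ≤ w c ∧ τ c = u)
    (honly : ∀ c', c' ≠ ω → 2 ≤ w c' → τ c' = u) :
    ∃ c, c ≠ ω ∧ 2 ≤ w c ∧ w c = d ∧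
      (∀ c', c' ≠ ω → 2 ≤ w c' → c' = c) ∧
      (∀ v, τ v = u → v = c) := by
  obtain ⟨c, hcω, hwc, hτc⟩ := hu
  -- Step 1: u ≠ ω
  have huω : u ≠ ω := by
    intro h
    subst h
    have hsub : ({u, c} : Finset V) ⊆ Finset.univ.filter (fun v => τ v = u) := by
      intro x hx
      simp only [Finset.mem_insert, Finset.mem_singleton] at hx
      rcases hx with rfl | rfl <;> simp [hfix, hτc]
    have := (Finset.sum_le_sum_of_subset hsub).trans (hloc u)
    rw [Finset.sum_pair (Ne.symm hcω)] at this
    omega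
  set F := Finset.univ.filter (fun v => τ v = u) with hF
  have hcF : c ∈ F := by simp [hF, hτc]
  have hωF : ω ∉ F := by simp [hF, hfix, Ne.symm huω]
  -- Step 2: sum over complement of F of (w v - 1) equals d - 1
  have hcomp : ∑ v ∈ Fᶜ, (w v - 1) = d - 1 := by
    have hωc : ω ∈ Fᶜ := Finset.mem_compl.mpr hωF
    rw [Finset.sum_eq_single_of_mem ω hωc]
    · omega
    · intro v hv hvω
      have hvF : v ∉ F := Finset.mem_compl.mp hv
      by_contra h
      have h2 : 2 ≤ w v := by omega
      exact hvF (by simp [hF, honly v hvω h2])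
  have hsplit : ∑ v ∈ F, (w v - 1) + ∑ v ∈ Fᶜ, (w v - 1) = 2 * d - 2 := by
    rw [Finset.sum_add_sum_compl]; exact hRH
  have hFsum : ∑ v ∈ F, (w v - 1) = d - 1 := by omega
  -- Step 3: sum of w over F is (d-1) + card F, bounded by d
  have hsumw : ∑ v ∈ F, w v = (d - 1) + F.card := by
    have : ∑ v ∈ F, w v = ∑ v ∈ F, ((w v - 1) + 1) := by
      apply Finset.sum_congr rfl
      intro v _
      have := hw v
      omega
    rw [this, Finset.sum_add_distrib, hFsum, Finset.sum_const, smul_eq_mul, mul_one]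
  have hcard : F.card ≤ 1 := by
    have := hloc u
    rw [← hF] at this
    omega
  have hcard1 : F.card = 1 := le_antisymm hcard (Finset.card_pos.mpr ⟨c, hcF⟩)
  have hFeq : ∀ v ∈ F, v = c := by
    intro v hv
    exact Finset.card_le_one.mp hcard v hv c hcF
  have hwcd : w c = d := by
    have : ∑ v ∈ F, w v = w c := by
      rw [Finset.sum_eq_single_of_mem c hcF]
      intro v hv hvc
      exact absurd (hFeq v hv) hvc
    omega
  refine ⟨c, hcω, hwc, hwcd, ?_, ?_⟩
  · intro c' hc'ω hc'w
    exact hFeq c' (by simp [hF, honly c' hc'ω hc'w])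
  · intro v hv
    exact hFeq v (by simp [hF, hv])
end

section
/- Let (V, τ, w) be an abstract portrait and let A = {τ c : c ∈ V, w c ≥ 2, c not postcritical}. Then every postcritical vertex v ∈ V satisfies at least one of the following: (a) v = τ^[k] a for some a ∈ A and some integer k ≥ 0; or (b) v is τ-periodic (τ^[m] v = v for some m ≥ 1) and the cycle of v contains a critical vertex (there exist c with w c ≥ 2 and j ≥ 0 with τ^[j] v = c). -/
/-- Every postcritical vertex of an abstract portrait is either on the forward orbit of a
critical value `τ c` with `c` a critical vertex that is not postcritical, or lies on a
periodic cycle containing a critical vertex. -/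
theorem postcritical_orbit_or_attractor
    {V : Type*} [Fintype V]
    (τ : V → V) (w : V → ℕ)
    (hcp : ∀ v, 2 ≤ w v ∨ ∃ c k, 2 ≤ w c ∧ 1 ≤ k ∧ τ^[k] c = v) :
    ∀ v : V, (∃ c k, 2 ≤ w c ∧ 1 ≤ k ∧ τ^[k] c = v) →
      (∃ c k, 2 ≤ w c ∧ ¬(∃ c' k', 2 ≤ w c' ∧ 1 ≤ k' ∧ τ^[k'] c' = c) ∧
        τ^[k] (τ c) = v) ∨
      ((∃ m, 1 ≤ m ∧ τ^[m] v = v) ∧ ∃ c j, 2 ≤ w c ∧ τ^[j] v = c) := by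
  classical
  intro v hv
  by_cases hA : ∃ c k, 2 ≤ w c ∧ ¬(∃ c' k', 2 ≤ w c' ∧ 1 ≤ k' ∧ τ^[k'] c' = c) ∧
      τ^[k] (τ c) = v
  · exact Or.inl hA
  · right
    -- every critical vertex reaching v (in ≥1 steps) is itself postcritical
    set S := {c : V // 2 ≤ w c ∧ ∃ k, 1 ≤ k ∧ τ^[k] c = v} with hS
    have step : ∀ s : S, ∃ s' : S, ∃ k, 1 ≤ k ∧ τ^[k] s'.1 = s.1 := by
      rintro ⟨c, hc, k, hk, hkv⟩
      -- c must be postcritical, otherwise case (a)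
      by_cases hpc : ∃ c' k', 2 ≤ w c' ∧ 1 ≤ k' ∧ τ^[k'] c' = c
      · obtain ⟨c', k', hc', hk', hc'c⟩ := hpc
        have hreach : τ^[k + k'] c' = v := by
          rw [Function.iterate_add_apply, hc'c, hkv]
        exact ⟨⟨c', hc', k + k', le_trans hk' (Nat.le_add_left _ _), hreach⟩,
          k', hk', hc'c⟩
      · exfalso
        apply hA
        obtain ⟨n, rfl⟩ : ∃ n, k = n + 1 := ⟨k - 1, (Nat.succ_pred_eq_of_pos hk).symm⟩
        refine ⟨c, n, hc, hpc, ?_⟩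
        rwa [← Function.iterate_succ_apply]
    obtain ⟨c0, k0, hc0, hk0, hc0v⟩ := hv
    let g : S → S := fun s => (step s).choose
    have hg : ∀ s : S, ∃ k, 1 ≤ k ∧ τ^[k] (g s).1 = s.1 := fun s => (step s).choose_spec
    let f : ℕ → S := fun n => g^[n] ⟨c0, hc0, k0, hk0, hc0v⟩
    have hf : ∀ n, f (n + 1) = g (f n) := fun n => Function.iterate_succ_apply' g n _
    -- composed reach: f (m+d) reaches f m in ≥ d steps
    have hcomp : ∀ d m, ∃ k, d ≤ k ∧ τ^[k] (f (m + d)).1 = (f m).1 := by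
      intro d
      induction d with
      | zero => exact fun m => ⟨0, le_refl _, rfl⟩
      | succ d ih =>
        intro m
        obtain ⟨k, hk, hkeq⟩ := ih m
        obtain ⟨k1, hk1, hk1eq⟩ := hg (f (m + d))
        refine ⟨k + k1, by omega, ?_⟩
        rw [show m + (d + 1) = (m + d) + 1 by ring, hf,
          Function.iterate_add_apply, hk1eq, hkeq]
    -- f is not injective
    have : ∃ i j, i ≠ j ∧ f i = f j := Finite.exists_ne_map_eq_of_infinite f
    obtain ⟨i, j, hij, hfij⟩ := this
    -- wlog i < j
    obtain ⟨i, j, hlt, hfij⟩ : ∃ i j, i < j ∧ f i = f j := by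
      rcases lt_or_gt_of_ne hij with h | h
      · exact ⟨i, j, h, hfij⟩
      · exact ⟨j, i, h, hfij.symm⟩
    obtain ⟨k, hk, hkeq⟩ := hcomp (j - i) i
    rw [show i + (j - i) = j by omega, ← hfij] at hkeq
    -- now (f i).1 is periodic with some period k ≥ 1
    set c := (f i).1 with hc
    have hk1 : 1 ≤ k := le_trans (by omega) hk
    obtain ⟨hcrit, kv, hkv1, hkvv⟩ := (f i).2
    have hper : ∀ t, τ^[k * t] c = c := by
      intro t
      rw [Function.iterate_mul]
      exact Function.iterate_fixed hkeq t
    constructor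
    · refine ⟨k, hk1, ?_⟩
      rw [← hkvv, ← Function.iterate_add_apply, add_comm,
        Function.iterate_add_apply, hkeq]
    · refine ⟨c, k * kv - kv, hcrit, ?_⟩
      have h1 : kv ≤ k * kv := Nat.le_mul_of_pos_left kv (by omega)
      rw [← hkvv, ← Function.iterate_add_apply, show k * kv - kv + kv = k * kv by omega,
        hper]
end

section
/- Let (V, τ, w, ω) be an abstract polynomial portrait of degree d, let u be a finite critical value, and suppose there exists a non-critical vertex q (i.e., w q = 1) with τ q = u. Then the portrait has at least two distinct finite critical values: there exists a finite critical vertex c′ with τ c′ ≠ u, and τ c′ is a finite critical value different from u. -/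
/-- If `u` is a finite critical value of an abstract polynomial portrait and some
non-critical vertex maps to `u`, then the portrait has at least two distinct finite
critical values: there is a finite critical vertex `c'` with `τ c' ≠ u`. -/
theorem two_finite_critical_values
    {V : Type*} [Fintype V] [DecidableEq V]
    (τ : V → V) (w : V → ℕ) (ω : V) (d : ℕ)
    (hd : 2 ≤ d)
    (hw : ∀ v, 1 ≤ w v)
    (hfix : τ ω = ω) (hwω : w ω = d)
    (hcp : ∀ v, 2 ≤ w v ∨ ∃ c k, 2 ≤ w c ∧ 1 ≤ k ∧ τ^[k] c = v)
    (hRH : ∑ v, (w v - 1) = 2 * d - 2)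
    (hloc : ∀ v, ∑ u ∈ Finset.univ.filter (fun u => τ u = v), w u ≤ d)
    (u : V) (hu : ∃ c, c ≠ ω ∧ 2 ≤ w c ∧ τ c = u)
    (hq : ∃ q, w q = 1 ∧ τ q = u) :
    ∃ c', c' ≠ ω ∧ 2 ≤ w c' ∧ τ c' ≠ u := by
  by_contra h
  push_neg at h
  obtain ⟨c, hcω, hcw, hcu⟩ := hu
  obtain ⟨q, hqw, hqu⟩ := hq
  set C : Finset V := Finset.univ.filter (fun v => v ≠ ω ∧ 2 ≤ w v) with hC
  have hCsub : C ⊆ Finset.univ.filter (fun x => τ x = u) := by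
    intro x hx
    simp only [hC, Finset.mem_filter, Finset.mem_univ, true_and] at hx ⊢
    exact h x hx.1 hx.2
  have hqC : q ∉ C := by
    simp only [hC, Finset.mem_filter, Finset.mem_univ, true_and, not_and]
    intro _; omega
  have hqS : q ∈ Finset.univ.filter (fun x => τ x = u) := by simp [hqu]
  have hcC : c ∈ C := by simp [hC, hcω, hcw]
  have hsplit : (w ω - 1) + ∑ v ∈ Finset.univ.erase ω, (w v - 1) = 2 * d - 2 := by
    rw [← hRH]
    exact Finset.add_sum_erase Finset.univ (fun v => w v - 1) (Finset.mem_univ ω)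
  have herase : ∑ v ∈ Finset.univ.erase ω, (w v - 1) = d - 1 := by omega
  have hCsum : ∑ v ∈ C, (w v - 1) = d - 1 := by
    rw [← herase]
    apply Finset.sum_subset
    · intro x hx
      simp only [hC, Finset.mem_filter, Finset.mem_univ, true_and] at hx
      simp [hx.1]
    · intro x hx hxC
      simp only [Finset.mem_erase, Finset.mem_univ, and_true] at hx
      simp only [hC, Finset.mem_filter, Finset.mem_univ, true_and, not_and] at hxC
      have := hw x
      have := hxC hx
      omega
  have hCw : ∑ v ∈ C, w v = (d - 1) + C.card := by
    have h1 : ∑ v ∈ C, w v = ∑ v ∈ C, ((w v - 1) + 1) := by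
      apply Finset.sum_congr rfl; intro x _; have := hw x; omega
    rw [h1, Finset.sum_add_distrib, hCsum, Finset.sum_const, smul_eq_mul, mul_one]
  have hcard : 1 ≤ C.card := Finset.card_pos.mpr ⟨c, hcC⟩
  have hle : ∑ v ∈ C, w v + w q ≤ ∑ x ∈ Finset.univ.filter (fun x => τ x = u), w x := by
    calc ∑ v ∈ C, w v + w q = ∑ v ∈ insert q C, w v := by
          rw [Finset.sum_insert hqC]; ring
      _ ≤ _ := Finset.sum_le_sum_of_subset (by
          intro x hx
          rcases Finset.mem_insert.mp hx with rfl | hx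
          · exact hqS
          · exact hCsub hx)
  have := hloc u
  omega
end

section
/- Let W be a nonempty finite type, Y a type, t : W → Y a function, and let m be the maximum, over y in the range of t, of the cardinality of the fiber {w ∈ W : t w = y}. Then for any designated element w₀ ∈ W there exists a function c : W → Fin m such that: (a) c is surjective; (b) for all w ≠ w′ in W, if c w = c w′ then t w ≠ t w′ (i.e., the restriction of t to each color class is injective); and (c) c w₀ is the largest element of Fin m. -/
/-- A coloring lemma: if `t : W → Y` with `W` nonempty finite and `m` is the maximal
cardinality of a fiber of `t`, then `W` can be colored surjectively by `Fin m` so that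
`t` is injective on each color class, with a prescribed element `w₀` receiving the
largest color. -/
theorem fiber_coloring
    {W Y : Type*} [Fintype W] [Nonempty W] [DecidableEq Y]
    (t : W → Y) (m : ℕ)
    (hm : m = (Finset.univ.image t).sup
      (fun y => (Finset.univ.filter (fun w => t w = y)).card))
    (w₀ : W) :
    ∃ c : W → Fin m,
      Function.Surjective c ∧
      (∀ w w', w ≠ w' → c w = c w' → t w ≠ t w') ∧
      (∀ i : Fin m, i ≤ c w₀) := by
  classical
  set f : Y → ℕ := fun y => (Finset.univ.filter (fun w => t w = y)).card with hf
  have hfm : ∀ w : W, f (t w) ≤ m := by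
    intro w
    rw [hm]
    exact Finset.le_sup (Finset.mem_image_of_mem t (Finset.mem_univ w))
  have hmpos : 0 < m := by
    obtain ⟨w⟩ := ‹Nonempty W›
    have h1 : 0 < f (t w) := Finset.card_pos.2 ⟨w, by simp [hf]⟩
    exact lt_of_lt_of_le h1 (hfm w)
  let e := Fintype.equivFin W
  let rank : W → ℕ := fun w =>
    (Finset.univ.filter (fun w' => t w' = t w ∧ e w' < e w)).card
  have hrank_lt : ∀ w, rank w < m := by
    intro w
    have hsub : (Finset.univ.filter (fun w' => t w' = t w ∧ e w' < e w)) ⊂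
        Finset.univ.filter (fun w' => t w' = t w) := by
      refine Finset.ssubset_iff_of_subset ?_ |>.2 ⟨w, by simp, by simp⟩
      intro u hu
      simp only [Finset.mem_filter, Finset.mem_univ, true_and] at hu ⊢
      exact hu.1
    exact lt_of_lt_of_le (Finset.card_lt_card hsub) (hfm w)
  have hrank_mono : ∀ w w', t w = t w' → e w < e w' → rank w < rank w' := by
    intro w w' ht hlt
    apply Finset.card_lt_card
    refine Finset.ssubset_iff_of_subset ?_ |>.2 ⟨w, ?_, ?_⟩
    · intro u hu
      simp only [Finset.mem_filter, Finset.mem_univ, true_and] at hu ⊢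
      exact ⟨hu.1.trans ht, hu.2.trans hlt⟩
    · simp [ht, hlt]
    · simp
  have hrank_inj : ∀ w w', t w = t w' → rank w = rank w' → w = w' := by
    intro w w' ht hr
    by_contra hne
    have hne' : e w ≠ e w' := fun h => hne (e.injective h)
    rcases lt_or_gt_of_ne hne' with h | h
    · exact absurd hr (hrank_mono w w' ht h).ne
    · exact absurd hr.symm (hrank_mono w' w ht.symm h).ne
  let rk : W → Fin m := fun w => ⟨rank w, hrank_lt w⟩
  have hrk_inj : ∀ w w', t w = t w' → rk w = rk w' → w = w' := by
    intro w w' ht h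
    exact hrank_inj w w' ht (congrArg Fin.val h)
  let top : Fin m := ⟨m - 1, by omega⟩
  let c : W → Fin m := fun w =>
    if t w = t w₀ then Equiv.swap (rk w₀) top (rk w) else rk w
  refine ⟨c, ?_, ?_, ?_⟩
  · -- surjectivity
    obtain ⟨y, hy, hym⟩ := Finset.exists_mem_eq_sup (Finset.univ.image t)
      (by obtain ⟨w⟩ := ‹Nonempty W›; exact ⟨t w, Finset.mem_image_of_mem t (Finset.mem_univ w)⟩)
      (fun y => (Finset.univ.filter (fun w => t w = y)).card)
    have hcard : (Finset.univ.filter (fun w => t w = y)).card = m := by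
      rw [hm]; exact hym.symm
    set F := Finset.univ.filter (fun w => t w = y) with hF
    have hty : ∀ w : W, w ∈ F → t w = y := by
      intro w hw; simpa [hF] using hw
    let g : {w // w ∈ F} → Fin m := fun w => rk w.1
    have hg_inj : Function.Injective g := by
      intro a b hab
      exact Subtype.ext (hrk_inj a.1 b.1 (by rw [hty a.1 a.2, hty b.1 b.2]) hab)
    have hg_bij : Function.Bijective g := by
      rw [Fintype.bijective_iff_injective_and_card]
      refine ⟨hg_inj, ?_⟩
      simp [Fintype.card_coe, hcard]
    intro j
    by_cases hyw : y = t w₀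
    · obtain ⟨⟨w, hw⟩, hgw⟩ := hg_bij.2 (Equiv.swap (rk w₀) top j)
      refine ⟨w, ?_⟩
      have : t w = t w₀ := (hty w hw).trans hyw
      simp only [c, this, if_pos rfl]
      rw [show rk w = Equiv.swap (rk w₀) top j from hgw]
      exact Equiv.swap_apply_self _ _ _
    · obtain ⟨⟨w, hw⟩, hgw⟩ := hg_bij.2 j
      refine ⟨w, ?_⟩
      have : t w ≠ t w₀ := by rw [hty w hw]; exact fun h => hyw h
      simp only [c, if_neg this]
      exact hgw
  · -- injective on color classes
    intro w w' hne hc ht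
    apply hne
    by_cases h : t w = t w₀
    · have h' : t w' = t w₀ := ht ▸ h
      simp only [c, if_pos h, if_pos h'] at hc
      exact hrk_inj w w' ht ((Equiv.swap (rk w₀) top).injective hc)
    · have h' : t w' ≠ t w₀ := fun hh => h (ht ▸ hh)
      simp only [c, if_neg h, if_neg h'] at hc
      exact hrk_inj w w' ht hc
  · intro i
    have : c w₀ = top := by simp [c, Equiv.swap_apply_left]
    rw [this]
    have := i.isLt
    simp only [Fin.le_def, top]
    omega
end

section
/- Let P, Q ∈ ℂ[X] be coprime polynomials with max (natDegree P) (natDegree Q) = 2 (so that z ↦ P(z)/Q(z) is a quadratic rational map). Suppose a, b, c, d ∈ ℂ satisfy: Q.eval a ≠ 0, Q.eval b ≠ 0, Q.eval c ≠ 0, Q.eval d ≠ 0; a ≠ b and c ≠ d; P.eval a = b * Q.eval a and P.eval b = a * Q.eval b; P.eval c = d * Q.eval c and P.eval d = c * Q.eval d. Then ({a, b} : Set ℂ) = ({c, d} : Set ℂ). In other words, a quadratic rational map has at most one periodic cycle of period 2 (among cycles contained in ℂ and avoiding the poles). -/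
/-!
For a 2-cycle `{a, b}` of `P / Q` with `P` and `Q` of degree at most two, the equations
`P a = b * Q a` and `P b = a * Q b` turn into two *linear* equations in `s = a + b` and
`m = a * b`. When the determinant of this system is nonzero it pins down `(s, m)`, hence `{a, b}`.
When the determinant vanishes, the existence of a solution forces `P` and `Q` to have a common
root, which coprimality rules out.
-/

open Polynomial

theorem Polynomial.eval_eq_of_natDegree_le_two {R : Type*} [CommSemiring R] {p : R[X]}
    (hp : p.natDegree ≤ 2) (z : R) :
    p.eval z = p.coeff 0 + p.coeff 1 * z + p.coeff 2 * z ^ 2 := by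
  simp [eval_eq_sum_range' (Nat.lt_succ_of_le hp), Finset.sum_range_succ]

theorem Polynomial.coeff_ne_zero_or_of_max_natDegree_eq {R : Type*} [Semiring R] {p q : R[X]}
    {n : ℕ} (h : max p.natDegree q.natDegree = n) (hn : n ≠ 0) :
    p.coeff n ≠ 0 ∨ q.coeff n ≠ 0 := by
  have key : ∀ r : R[X], r.natDegree = n → r.coeff n ≠ 0 := fun r hr => by
    rw [← hr, coeff_natDegree, leadingCoeff_ne_zero]
    rintro rfl
    exact hn (hr ▸ natDegree_zero)
  rcases max_choice p.natDegree q.natDegree with hp | hq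
  · exact .inl (key p (hp ▸ h))
  · exact .inr (key q (hq ▸ h))

theorem Set.pair_eq_pair_of_add_eq_of_mul_eq {R : Type*} [CommRing R] [IsDomain R]
    {a b c d : R} (hs : a + b = c + d) (hm : a * b = c * d) : ({a, b} : Set R) = {c, d} := by
  have hc : (c - a) * (c - b) = 0 := by linear_combination hm - c * hs
  rcases mul_eq_zero.1 hc with h | h
  · obtain rfl : c = a := sub_eq_zero.1 h
    obtain rfl : b = d := add_left_cancel hs
    rfl
  · obtain rfl : c = b := sub_eq_zero.1 h
    obtain rfl : a = d := by linear_combination hs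
    exact Set.pair_comm _ _

section TwoCycle

variable {R : Type*} [CommRing R] {P Q : R[X]}

/-- With `E x y = P.eval x - y * Q.eval x`, these are `(E a b - E b a) / (a - b) = 0` and
`(b * E a b - a * E b a) / (a - b) = 0`, written in `s = a + b` and `m = a * b`. -/
def TwoCycleSystem (P Q : R[X]) (s m : R) : Prop :=
  P.coeff 2 * s - Q.coeff 2 * m + P.coeff 1 + Q.coeff 0 = 0 ∧
    Q.coeff 0 * s + (P.coeff 2 + Q.coeff 1) * m = P.coeff 0

/-- The determinant of `TwoCycleSystem P Q` as a linear system in `(s, m)`. -/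
def twoCycleDet (P Q : R[X]) : R :=
  P.coeff 2 * (P.coeff 2 + Q.coeff 1) + Q.coeff 2 * Q.coeff 0

theorem twoCycleSystem_add_mul [IsDomain R] (hP : P.natDegree ≤ 2) (hQ : Q.natDegree ≤ 2)
    {a b : R} (hab : a ≠ b) (ha : P.eval a = b * Q.eval a) (hb : P.eval b = a * Q.eval b) :
    TwoCycleSystem P Q (a + b) (a * b) := by
  rw [eval_eq_of_natDegree_le_two hP, eval_eq_of_natDegree_le_two hQ] at ha hb
  have hab' : a - b ≠ 0 := sub_ne_zero.2 hab
  constructor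
  · refine (mul_eq_zero.1 ?_).resolve_left hab'
    linear_combination ha - hb
  · refine mul_left_cancel₀ hab' ?_
    linear_combination b * ha - a * hb

theorem TwoCycleSystem.eq [IsDomain R] (hdet : twoCycleDet P Q ≠ 0) {s m s' m' : R}
    (h : TwoCycleSystem P Q s m) (h' : TwoCycleSystem P Q s' m') : s = s' ∧ m = m' := by
  obtain ⟨h₁, h₂⟩ := h
  obtain ⟨h₁', h₂'⟩ := h'
  constructor
  · refine mul_left_cancel₀ hdet ?_
    unfold twoCycleDet
    linear_combination (P.coeff 2 + Q.coeff 1) * (h₁ - h₁') + Q.coeff 2 * (h₂ - h₂')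
  · refine mul_left_cancel₀ hdet ?_
    unfold twoCycleDet
    linear_combination P.coeff 2 * (h₂ - h₂') - Q.coeff 0 * (h₁ - h₁')

end TwoCycle

/- Both witnesses are the root `z` of the factorisation `Q = (X - z) * (Q.coeff 2 * X - P.coeff 2)`
that the vanishing determinant forces. -/
theorem TwoCycleSystem.exists_common_root {K : Type*} [Field K] {P Q : K[X]}
    (hP : P.natDegree ≤ 2) (hQ : Q.natDegree ≤ 2) (hlead : P.coeff 2 ≠ 0 ∨ Q.coeff 2 ≠ 0)
    (hdet : twoCycleDet P Q = 0) {s m : K} (h : TwoCycleSystem P Q s m) :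
    ∃ z, P.eval z = 0 ∧ Q.eval z = 0 := by
  obtain ⟨h₁, h₂⟩ := h
  unfold twoCycleDet at hdet
  simp only [eval_eq_of_natDegree_le_two hP, eval_eq_of_natDegree_le_two hQ]
  rcases hlead with hp | hq
  · refine ⟨Q.coeff 0 / P.coeff 2, ?_, ?_⟩
    · field_simp
      linear_combination m * hdet - P.coeff 2 * h₂ + Q.coeff 0 * h₁
    · field_simp
      linear_combination Q.coeff 0 * hdet
  · refine ⟨-(P.coeff 2 + Q.coeff 1) / Q.coeff 2, ?_, ?_⟩
    · field_simp
      linear_combination (Q.coeff 2 * s + P.coeff 2 + Q.coeff 1) * hdet -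
        Q.coeff 2 * ((P.coeff 2 + Q.coeff 1) * h₁ + Q.coeff 2 * h₂)
    · field_simp
      linear_combination hdet

theorem quadratic_rational_unique_two_cycle_general
    (P Q : ℂ[X]) (hcop : IsCoprime P Q)
    (hdeg : max P.natDegree Q.natDegree = 2)
    (a b c d : ℂ)
    (hab : a ≠ b) (hcd : c ≠ d)
    (hPa : P.eval a = b * Q.eval a) (hPb : P.eval b = a * Q.eval b)
    (hPc : P.eval c = d * Q.eval c) (hPd : P.eval d = c * Q.eval d) :
    ({a, b} : Set ℂ) = ({c, d} : Set ℂ) := by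
  have hP : P.natDegree ≤ 2 := hdeg ▸ le_max_left _ _
  have hQ : Q.natDegree ≤ 2 := hdeg ▸ le_max_right _ _
  have hsys := twoCycleSystem_add_mul hP hQ hab hPa hPb
  have hsys' := twoCycleSystem_add_mul hP hQ hcd hPc hPd
  by_cases hdet : twoCycleDet P Q = 0
  · obtain ⟨z, hPz, hQz⟩ := hsys.exists_common_root hP hQ
      (coeff_ne_zero_or_of_max_natDegree_eq hdeg two_ne_zero) hdet
    exact absurd (aeval_ne_zero_of_isCoprime hcop z) (by simp [hPz, hQz])
  · obtain ⟨hs, hm⟩ := hsys.eq hdet hsys'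
    exact Set.pair_eq_pair_of_add_eq_of_mul_eq hs hm

/-- A quadratic rational map has at most one periodic cycle of period 2 (among cycles
contained in `ℂ` and avoiding the poles). -/
theorem quadratic_rational_unique_two_cycle
    (P Q : ℂ[X]) (hcop : IsCoprime P Q)
    (hdeg : max P.natDegree Q.natDegree = 2)
    (a b c d : ℂ)
    (hQa : Q.eval a ≠ 0) (hQb : Q.eval b ≠ 0) (hQc : Q.eval c ≠ 0) (hQd : Q.eval d ≠ 0)
    (hab : a ≠ b) (hcd : c ≠ d)
    (hPa : P.eval a = b * Q.eval a) (hPb : P.eval b = a * Q.eval b)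
    (hPc : P.eval c = d * Q.eval c) (hPd : P.eval d = c * Q.eval d) :
    ({a, b} : Set ℂ) = ({c, d} : Set ℂ) :=
  quadratic_rational_unique_two_cycle_general P Q hcop hdeg a b c d hab hcd hPa hPb hPc hPd
end
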